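/- Let S be a finite set of points of ℝ^n all of norm r > 0 and containing at least two elements, and let y ∈ ℝ^n be such that S_*(y) ≠ S. Then the energy gap satisfies 0 < c(y) ≤ 2 r ‖y‖. -/

import Mathlib

/-!
Let `x₀ ∈ S` be a closest point to `y` and `x ∈ S` any point that is not closest. Since
`‖x₀‖ = ‖x‖`, the squared norms cancel in `‖y - x‖² - ‖y - x₀‖² = 2 ⟪y, x₀ - x⟫`, and
Cauchy–Schwarz with `‖x₀ - x‖ ≤ 2r` bounds this by `4 r ‖y‖`. Positivity holds because the
minimum in `c(y)` is taken over a finite set of points strictly farther than `dist(y, S)`.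
-/

open scoped Classical BigOperators

noncomputable section

/-- `dist(y,S) = min_{x∈S} ‖y−x‖` (as the infimum of a finite nonempty set of reals). -/
def distS {n : ℕ} (S : Finset (EuclideanSpace ℝ (Fin n))) (y : EuclideanSpace ℝ (Fin n)) : ℝ :=
  sInf ((fun x => ‖y - x‖) '' ↑S)

/-- `S_*(y)`, the set of closest points of `S` to `y`. -/
def Sstar {n : ℕ} (S : Finset (EuclideanSpace ℝ (Fin n))) (y : EuclideanSpace ℝ (Fin n)) :
    Finset (EuclideanSpace ℝ (Fin n)) :=
  S.filter fun x => ‖y - x‖ = distS S y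

/-- The energy gap `c(y) = min_{x ∈ S∖S_*(y)} ‖y−x‖²/2 − dist(y,S)²/2`. -/
def gap {n : ℕ} (S : Finset (EuclideanSpace ℝ (Fin n))) (y : EuclideanSpace ℝ (Fin n)) : ℝ :=
  sInf ((fun x => ‖y - x‖ ^ 2 / 2) '' (↑S \ ↑(Sstar S y))) - distS S y ^ 2 / 2

theorem half_sq_norm_sub_sub_half_sq_norm_sub_le {E : Type*} [NormedAddCommGroup E]
    [InnerProductSpace ℝ E] {x₀ x y : E} {r : ℝ} (hx₀ : ‖x₀‖ = r) (hx : ‖x‖ = r) :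
    ‖y - x‖ ^ 2 / 2 - ‖y - x₀‖ ^ 2 / 2 ≤ 2 * r * ‖y‖ := by
  have hdiff : ‖y - x‖ ^ 2 / 2 - ‖y - x₀‖ ^ 2 / 2 = inner ℝ y (x₀ - x) := by
    rw [inner_sub_right, norm_sub_sq_real, norm_sub_sq_real, hx, hx₀]
    ring
  have hsub : ‖x₀ - x‖ ≤ 2 * r := by
    linarith [norm_sub_le x₀ x]
  calc ‖y - x‖ ^ 2 / 2 - ‖y - x₀‖ ^ 2 / 2 = inner ℝ y (x₀ - x) := hdiff
    _ ≤ ‖y‖ * ‖x₀ - x‖ := real_inner_le_norm _ _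
    _ ≤ ‖y‖ * (2 * r) := mul_le_mul_of_nonneg_left hsub (norm_nonneg _)
    _ = 2 * r * ‖y‖ := by ring

section NearestPoints

variable {n : ℕ} {S : Finset (EuclideanSpace ℝ (Fin n))} {y x : EuclideanSpace ℝ (Fin n)}

theorem distS_le (hx : x ∈ S) : distS S y ≤ ‖y - x‖ :=
  csInf_le (S.finite_toSet.image _).bddBelow ⟨x, hx, rfl⟩

theorem exists_mem_norm_sub_eq_distS (hS : S.Nonempty) : ∃ x₀ ∈ S, ‖y - x₀‖ = distS S y :=
  ((Finset.coe_nonempty.mpr hS).image _).csInf_mem (S.finite_toSet.image _)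

theorem distS_nonneg : 0 ≤ distS S y :=
  Real.sInf_nonneg (by rintro _ ⟨x, -, rfl⟩; exact norm_nonneg _)

theorem mem_Sstar : x ∈ Sstar S y ↔ x ∈ S ∧ ‖y - x‖ = distS S y :=
  Finset.mem_filter

theorem distS_lt_of_notMem_Sstar (hx : x ∈ S) (hx' : x ∉ Sstar S y) :
    distS S y < ‖y - x‖ :=
  (distS_le hx).lt_of_ne fun h => hx' (mem_Sstar.mpr ⟨hx, h.symm⟩)

theorem exists_mem_notMem_Sstar (hne : Sstar S y ≠ S) : ∃ x ∈ S, x ∉ Sstar S y :=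
  Finset.exists_of_ssubset ((Finset.filter_subset _ S).ssubset_of_ne hne)

theorem gap_le_of_notMem_Sstar (hx : x ∈ S) (hx' : x ∉ Sstar S y) :
    gap S y ≤ ‖y - x‖ ^ 2 / 2 - distS S y ^ 2 / 2 :=
  sub_le_sub_right
    (csInf_le (S.finite_toSet.sdiff.image (fun x => ‖y - x‖ ^ 2 / 2)).bddBelow
      ⟨x, ⟨hx, hx'⟩, rfl⟩) _

theorem exists_gap_eq (hne : Sstar S y ≠ S) :
    ∃ x ∈ S, x ∉ Sstar S y ∧ gap S y = ‖y - x‖ ^ 2 / 2 - distS S y ^ 2 / 2 := by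
  obtain ⟨x, hx, hx'⟩ := exists_mem_notMem_Sstar hne
  have hmem : x ∈ (↑S \ ↑(Sstar S y) : Set (EuclideanSpace ℝ (Fin n))) := ⟨hx, hx'⟩
  obtain ⟨x₁, ⟨hx₁, hx₁'⟩, hmin⟩ :=
    ((Set.nonempty_of_mem hmem).image (fun x => ‖y - x‖ ^ 2 / 2)).csInf_mem
      (S.finite_toSet.sdiff.image _)
  exact ⟨x₁, hx₁, hx₁', by rw [gap, ← hmin]⟩

theorem gap_pos (hne : Sstar S y ≠ S) : 0 < gap S y := by
  obtain ⟨x, hx, hx', hgap⟩ := exists_gap_eq hne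
  have hlt := distS_lt_of_notMem_Sstar hx hx'
  have hsq : distS S y ^ 2 < ‖y - x‖ ^ 2 :=
    pow_lt_pow_left₀ hlt distS_nonneg two_ne_zero
  linarith

theorem gap_le_of_norm_eq {r : ℝ} (hnorm : ∀ x ∈ S, ‖x‖ = r) (hne : Sstar S y ≠ S) :
    gap S y ≤ 2 * r * ‖y‖ := by
  obtain ⟨x, hx, hx'⟩ := exists_mem_notMem_Sstar hne
  obtain ⟨x₀, hx₀, hx₀dist⟩ := exists_mem_norm_sub_eq_distS ⟨x, hx⟩ (y := y)
  calc gap S y ≤ ‖y - x‖ ^ 2 / 2 - distS S y ^ 2 / 2 := gap_le_of_notMem_Sstar hx hx'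
    _ = ‖y - x‖ ^ 2 / 2 - ‖y - x₀‖ ^ 2 / 2 := by rw [hx₀dist]
    _ ≤ 2 * r * ‖y‖ :=
      half_sq_norm_sub_sub_half_sq_norm_sub_le (hnorm x₀ hx₀) (hnorm x hx)

end NearestPoints

theorem statement3_general {n : ℕ} (S : Finset (EuclideanSpace ℝ (Fin n))) (r : ℝ)
    (hnorm : ∀ x ∈ S, ‖x‖ = r)
    (y : EuclideanSpace ℝ (Fin n)) (hne : Sstar S y ≠ S) :
    0 < gap S y ∧ gap S y ≤ 2 * r * ‖y‖ :=
  ⟨gap_pos hne, gap_le_of_norm_eq hnorm hne⟩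

/-- Lemma 6.7(a) of the paper. If `S ⊂ ℝ^n` is a finite set of points of
common norm `r > 0` with at least two elements, and `y` is such that `S_*(y) ≠ S`, then the
energy gap satisfies `0 < c(y) ≤ 2 r ‖y‖`. -/
theorem statement3 {n : ℕ} (S : Finset (EuclideanSpace ℝ (Fin n))) (r : ℝ) (hr : 0 < r)
    (hnorm : ∀ x ∈ S, ‖x‖ = r) (hcard : 2 ≤ S.card)
    (y : EuclideanSpace ℝ (Fin n)) (hne : Sstar S y ≠ S) :
    0 < gap S y ∧ gap S y ≤ 2 * r * ‖y‖ :=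
  statement3_general S r hnorm y hne

end
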